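/- arXiv:1103.2041 — 6 statements merged into one kernel-verified Lean document; each statement's English description precedes it below -/
import Mathlib

section
/- The set of odd residues is the unique sum-free subset of ℤ/2nℤ of size n: if A ⊆ ℤ/2nℤ is sum-free and |A| = n, then A is the set of odd residues. -/
theorem odd_residues_unique_max_sum_free (n : ℕ) (hn : 1 ≤ n)
    (A : Set (ZMod (2 * n)))
    (hA : ∀ x ∈ A, ∀ y ∈ A, x + y ∉ A)
    (hcard : A.ncard = n) :
    A = {x : ZMod (2 * n) | ZMod.castHom (dvd_mul_right 2 n) (ZMod 2) x = 1} := by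
  haveI : NeZero (2 * n) := ⟨by omega⟩
  have hcardG : Nat.card (ZMod (2 * n)) = 2 * n := Nat.card_zmod _
  -- 0 ∉ A
  have h0 : (0 : ZMod (2 * n)) ∉ A := fun h => hA 0 h 0 h (by simpa using h)
  -- Step B : complement is a translate
  have hB : ∀ a ∈ A, ∀ z : ZMod (2 * n), z ∉ A → z - a ∈ A := by
    intro a ha z hz
    have hdisj : Disjoint A ((· + a) '' A) := by
      rw [Set.disjoint_right]
      rintro _ ⟨x, hx, rfl⟩
      exact hA x hx a ha
    have himg : ((· + a) '' A).ncard = n := by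
      rw [Set.ncard_image_of_injective _ (add_left_injective a), hcard]
    have huniv : A ∪ ((· + a) '' A) = Set.univ := by
      apply Set.eq_of_subset_of_ncard_le (Set.subset_univ _) _ (Set.toFinite _)
      rw [Set.ncard_univ, hcardG,
        Set.ncard_union_eq hdisj (Set.toFinite _) (Set.toFinite _), hcard, himg]
      omega
    have hz2 : z ∈ A ∪ ((· + a) '' A) := huniv ▸ Set.mem_univ z
    rcases hz2 with h | ⟨x, hx, hxe⟩
    · exact absurd h hz
    · have : x = z - a := by rw [← hxe]; ring
      rwa [← this]
  -- Step C : A is invariant under translation by differences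
  have hC : ∀ a ∈ A, ∀ b ∈ A, ∀ x : ZMod (2 * n), x ∈ A ↔ x + (a - b) ∈ A := by
    intro a ha b hb x
    constructor
    · intro hx
      have h1 : x + a ∉ A := hA x hx a ha
      have h2 := hB b hb (x + a) h1
      have e : x + a - b = x + (a - b) := by ring
      rwa [e] at h2
    · intro hx
      have h1 : (x + (a - b)) + b ∉ A := hA _ hx b hb
      have e : x + (a - b) + b = x + a := by ring
      rw [e] at h1
      have h2 := hB a ha (x + a) h1
      simpa using h2
  -- pick a0 ∈ A
  obtain ⟨a0, ha0⟩ : A.Nonempty := by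
    apply Set.nonempty_of_ncard_ne_zero; omega
  have hneg : ∀ a ∈ A, -a ∈ A := by
    intro a ha
    have := hB a ha 0 h0
    simpa using this
  -- the stabilizer set
  set HS : Set (ZMod (2 * n)) := {d | ∀ x : ZMod (2 * n), x ∈ A ↔ x + d ∈ A} with hHS
  have hA_eq : ∀ x : ZMod (2 * n), x ∈ A ↔ x - a0 ∈ HS := by
    intro x
    constructor
    · intro hx y
      exact hC x hx a0 ha0 y
    · intro hx
      have := (hx a0).mp ha0
      have e : a0 + (x - a0) = x := by ring
      rwa [e] at this
  have himgHS : (· + a0) '' HS = A := by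
    ext z
    constructor
    · rintro ⟨d, hd, rfl⟩
      have := (hd a0).mp ha0
      rwa [add_comm] at this
    · intro hz
      exact ⟨z - a0, (hA_eq z).mp hz, by simp⟩
  have hHScard : HS.ncard = n := by
    have h := Set.ncard_image_of_injective HS (add_left_injective a0)
    rw [himgHS, hcard] at h
    omega
  have hHSsub : HS ⊆ Aᶜ := by
    intro d hd hdA
    exact hA d hdA d hdA ((hd d).mp hdA)
  have hcompl : HS = Aᶜ := by
    apply Set.eq_of_subset_of_ncard_le hHSsub _ (Set.toFinite _)
    have := Set.ncard_add_ncard_compl A (Set.toFinite _) (Set.toFinite _)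
    rw [hcardG] at this
    omega
  -- HS is closed under addition
  have hadd : ∀ d ∈ HS, ∀ e ∈ HS, d + e ∈ HS := by
    intro d hd e he x
    rw [← add_assoc]
    exact (hd x).trans (he (x + d))
  -- all doubles lie in HS
  have hdouble : ∀ x : ZMod (2 * n), x + x ∈ HS := by
    intro x
    by_cases hx : x ∈ A
    · have := hC x hx (-x) (hneg x hx)
      have e : x - -x = x + x := by ring
      rw [e] at this
      exact this
    · have hxHS : x ∈ HS := by rw [hcompl]; exact hx
      exact hadd x hxHS x hxHS
  -- all even elements lie in HS
  have heven : ∀ x : ZMod (2 * n), ZMod.castHom (dvd_mul_right 2 n) (ZMod 2) x = 0 → x ∈ HS := by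
    intro x hx
    have hdvd : 2 ∣ x.val := by
      rwa [ZMod.castHom_apply, ← ZMod.natCast_val, ZMod.natCast_eq_zero_iff] at hx
    obtain ⟨t, ht⟩ := hdvd
    have : ((t : ZMod (2 * n))) + (t : ZMod (2 * n)) = x := by
      rw [← Nat.cast_add, ← two_mul, ← ht, ZMod.natCast_zmod_val]
    rw [← this]
    exact hdouble _
  have dichot : ∀ a : ZMod 2, a = 0 ∨ a = 1 := by decide
  -- A ⊆ odds
  have hsub : ∀ x ∈ A, ZMod.castHom (dvd_mul_right 2 n) (ZMod 2) x = 1 := by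
    intro x hx
    rcases dichot (ZMod.castHom (dvd_mul_right 2 n) (ZMod 2) x) with h | h
    · exact absurd hx (hHSsub (heven x h))
    · exact h
  -- conclude
  ext z
  simp only [Set.mem_setOf_eq]
  constructor
  · exact hsub z
  · intro hz
    rw [hA_eq]
    apply heven
    rw [map_sub, hz, hsub a0 ha0, sub_self]
end

section
/- Let q = 3k + 2 be a prime. The set {k+1, k+2, ..., 2k+1} ⊆ ℤ/qℤ is sum-free and has exactly (q+1)/3 elements. -/
theorem middle_interval_sum_free_mod_q (q k : ℕ) (hq : q.Prime) (hqk : q = 3 * k + 2)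
    (A : Set (ZMod q))
    (hA : A = {x : ZMod q | k + 1 ≤ x.val ∧ x.val ≤ 2 * k + 1}) :
    (∀ x ∈ A, ∀ y ∈ A, x + y ∉ A) ∧ A.ncard = (q + 1) / 3 := by
  haveI : NeZero q := ⟨hq.ne_zero⟩
  subst hA
  constructor
  · rintro x ⟨hx1, hx2⟩ y ⟨hy1, hy2⟩ ⟨hz1, hz2⟩
    have hval : (x + y).val = (x.val + y.val) % q := ZMod.val_add x y
    rcases Nat.lt_or_ge (x.val + y.val) q with h | h
    · rw [Nat.mod_eq_of_lt h] at hval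
      omega
    · have h2 : x.val + y.val - q < q := by omega
      have : (x.val + y.val) % q = x.val + y.val - q := by
        rw [Nat.mod_eq_sub_mod h, Nat.mod_eq_of_lt h2]
      omega
  · have himg : (fun n : ℕ => (n : ZMod q)) '' Set.Icc (k + 1) (2 * k + 1)
        = {x : ZMod q | k + 1 ≤ x.val ∧ x.val ≤ 2 * k + 1} := by
      ext x
      constructor
      · rintro ⟨n, ⟨hn1, hn2⟩, rfl⟩
        have : (n : ZMod q).val = n := ZMod.val_natCast_of_lt (by omega)
        simp only [Set.mem_setOf_eq, this]
        omega
      · rintro ⟨h1, h2⟩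
        exact ⟨x.val, ⟨h1, h2⟩, by simp [ZMod.natCast_val, ZMod.cast_id]⟩
    rw [← himg]
    rw [Set.ncard_image_of_injOn]
    · rw [Set.ncard_eq_toFinset_card', Set.toFinset_Icc, Nat.card_Icc]
      omega
    · intro a ha b hb hab
      have ha' : ((a : ZMod q)).val = a := ZMod.val_natCast_of_lt (by simp at ha; omega)
      have hb' : ((b : ZMod q)).val = b := ZMod.val_natCast_of_lt (by simp at hb; omega)
      rw [← ha', ← hb', congrArg ZMod.val hab]
end

section
/- Let q be a prime with q ≡ 2 (mod 3), let G be a finite abelian group, and let φ : G → ℤ/qℤ be a surjective group homomorphism. Writing q = 3k+2, the set A = φ⁻¹({k+1, ..., 2k+1}) is a sum-free subset of G of size (k+1)|G|/q. -/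
theorem preimage_middle_interval_sum_free
    (G : Type*) [AddCommGroup G] [Fintype G]
    (q k : ℕ) (hq : q.Prime) (hq2 : q % 3 = 2) (hqk : q = 3 * k + 2)
    (φ : G →+ ZMod q) (hφ : Function.Surjective φ)
    (A : Set G)
    (hA : A = φ ⁻¹' {x : ZMod q | k + 1 ≤ x.val ∧ x.val ≤ 2 * k + 1}) :
    (∀ x ∈ A, ∀ y ∈ A, x + y ∉ A) ∧ q * A.ncard = (k + 1) * Fintype.card G := by
  have hq0 : 0 < q := hq.pos
  haveI : NeZero q := ⟨hq0.ne'⟩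
  subst hA
  constructor
  · intro x hx y hy hxy
    simp only [Set.mem_preimage, Set.mem_setOf_eq, map_add] at hx hy hxy
    rw [ZMod.val_add] at hxy
    rcases Nat.lt_or_ge ((φ x).val + (φ y).val) q with h | h
    · rw [Nat.mod_eq_of_lt h] at hxy; omega
    · have hlt : (φ x).val + (φ y).val - q < q := by
        have := (φ x).val_lt
        have := (φ y).val_lt
        omega
      rw [Nat.mod_eq_sub_mod h, Nat.mod_eq_of_lt hlt] at hxy; omega
  · -- cardinality
    set S : Set (ZMod q) := {x : ZMod q | k + 1 ≤ x.val ∧ x.val ≤ 2 * k + 1} with hS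
    have hSval : S = ZMod.val ⁻¹' (Set.Icc (k + 1) (2 * k + 1)) := by
      ext x; simp [hS, Set.mem_Icc]
    have hScard : Nat.card S = k + 1 := by
      rw [hSval, Nat.card_preimage_of_injective (ZMod.val_injective q)]
      · rw [Nat.card_coe_set_eq, Set.ncard_eq_toFinset_card', Set.toFinset_Icc,
          Nat.card_Icc]
        omega
      · intro n hn
        simp only [Set.mem_Icc] at hn
        exact ⟨(n : ZMod q), ZMod.val_natCast_of_lt (by omega)⟩
    -- first isomorphism theorem
    obtain ⟨ψ, hψ⟩ : ∃ ψ : G ⧸ φ.ker ≃ ZMod q, ∀ g : G, ψ (QuotientAddGroup.mk g) = φ g := by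
      refine ⟨(QuotientAddGroup.quotientKerEquivOfSurjective φ hφ).toEquiv, fun g => rfl⟩
    have hpre : φ ⁻¹' S = QuotientAddGroup.mk ⁻¹' (ψ ⁻¹' S) := by
      ext g; simp [Set.mem_preimage, hψ]
    have hcard1 : Nat.card (φ ⁻¹' S) = Nat.card φ.ker * Nat.card S := by
      rw [hpre,
        Nat.card_congr (QuotientAddGroup.preimageMkEquivAddSubgroupProdSet φ.ker (ψ ⁻¹' S)),
        Nat.card_prod, Nat.card_preimage_of_injective ψ.injective
        (by intro x _; exact ⟨ψ.symm x, ψ.apply_symm_apply x⟩)]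
    have hG : Nat.card G = q * Nat.card φ.ker := by
      rw [AddSubgroup.card_eq_card_quotient_mul_card_addSubgroup φ.ker,
        Nat.card_congr ψ, Nat.card_zmod]
    rw [← Nat.card_coe_set_eq, hcard1, hScard, ← Nat.card_eq_fintype_card, hG]
    ring
end

section
/- Let G be a finite abelian group, let q be a prime with q ≡ 2 (mod 3), let φ : G → ℤ/qℤ be a surjective homomorphism with q = 3k+2, and let A = φ⁻¹({k+1, ..., 2k+1}). Then A ∪ (A + A) = G. -/
open Pointwise

lemma key_interval (q k : ℕ) (hqk : q = 3 * k + 2) (x : ZMod q) :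
    (k + 1 ≤ x.val ∧ x.val ≤ 2 * k + 1) ∨
    ∃ y z : ZMod q, (k + 1 ≤ y.val ∧ y.val ≤ 2 * k + 1) ∧
      (k + 1 ≤ z.val ∧ z.val ≤ 2 * k + 1) ∧ y + z = x := by
  haveI : NeZero q := ⟨by omega⟩
  have hv : x.val < q := x.val_lt
  have hx : ((x.val : ZMod q)) = x := by
    simpa using (ZMod.natCast_val x).trans (ZMod.cast_id _ _)
  by_cases h1 : x.val ≤ k
  · right
    refine ⟨((2 * k + 1 : ℕ) : ZMod q), ((x.val + k + 1 : ℕ) : ZMod q), ?_, ?_, ?_⟩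
    · rw [ZMod.val_natCast_of_lt (by omega)]; omega
    · rw [ZMod.val_natCast_of_lt (by omega)]; omega
    · rw [← Nat.cast_add, show 2 * k + 1 + (x.val + k + 1) = x.val + q from by omega,
        Nat.cast_add, ZMod.natCast_self, add_zero, hx]
  · by_cases h2 : x.val ≤ 2 * k + 1
    · left; omega
    · right
      refine ⟨((k + 1 : ℕ) : ZMod q), ((x.val - k - 1 : ℕ) : ZMod q), ?_, ?_, ?_⟩
      · rw [ZMod.val_natCast_of_lt (by omega)]; omega
      · rw [ZMod.val_natCast_of_lt (by omega)]; omega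
      · rw [← Nat.cast_add, show k + 1 + (x.val - k - 1) = x.val from by omega, hx]

theorem preimage_middle_interval_union_sumset_eq_univ
    (G : Type*) [AddCommGroup G] [Fintype G]
    (q k : ℕ) (hq : q.Prime) (hq2 : q % 3 = 2) (hqk : q = 3 * k + 2)
    (φ : G →+ ZMod q) (hφ : Function.Surjective φ)
    (A : Set G)
    (hA : A = φ ⁻¹' {x : ZMod q | k + 1 ≤ x.val ∧ x.val ≤ 2 * k + 1}) :
    A ∪ (A + A) = Set.univ := by
  subst hA
  ext g
  simp only [Set.mem_univ, iff_true, Set.mem_union]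
  rcases key_interval q k hqk (φ g) with h | ⟨y, z, hy, hz, hyz⟩
  · left; exact h
  · right
    obtain ⟨a, ha⟩ := hφ y
    refine Set.mem_add.mpr ⟨a, ?_, g - a, ?_, by abel⟩
    · simpa [ha] using hy
    · have : φ (g - a) = z := by
        rw [map_sub, ha, ← hyz]; abel
      simpa [this] using hz
end

section
/- Let G = ℤ/2nℤ, let O be the odd residues, fixing x ∈ E with x ≠ n and x ≠ 0 (E the even residues). Then the number of unordered pairs {y,z} ⊆ O of distinct elements with y − z = x or z − y = x is exactly n, and the number of unordered pairs {y,z} ⊆ O of distinct elements with y + z = x is at least (n−2)/2. -/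
open Set

private lemma zmod_two_torsion (n : ℕ) (hn : 2 ≤ n) (a : ZMod (2 * n)) (h : a + a = 0) :
    a = 0 ∨ a = (n : ZMod (2 * n)) := by
  haveI : NeZero (2 * n) := ⟨by omega⟩
  have hv : ((2 * a.val : ℕ) : ZMod (2 * n)) = 0 := by
    push_cast [ZMod.natCast_zmod_val]
    linear_combination h
  have hdvd : (2 * n : ℕ) ∣ 2 * a.val := (ZMod.natCast_eq_zero_iff _ _).mp hv
  have hlt : a.val < 2 * n := ZMod.val_lt a
  obtain ⟨k, hk⟩ := hdvd
  have hval : a.val = 0 ∨ a.val = n := by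
    have hk2 : k ≤ 1 := by
      by_contra hk2
      have h2 : 2 * n * 2 ≤ 2 * n * k := Nat.mul_le_mul_left _ (by omega)
      omega
    interval_cases k <;> omega
  rcases hval with hval | hval
  · left
    rw [← ZMod.natCast_zmod_val a, hval, Nat.cast_zero]
  · right
    rw [← ZMod.natCast_zmod_val a, hval]

theorem count_difference_and_sum_pairs (n : ℕ) (hn : 2 ≤ n)
    (O E : Set (ZMod (2 * n)))
    (hO : O = {x : ZMod (2 * n) | ZMod.castHom (dvd_mul_right 2 n) (ZMod 2) x = 1})
    (hE : E = {x : ZMod (2 * n) | ZMod.castHom (dvd_mul_right 2 n) (ZMod 2) x = 0})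
    (x : ZMod (2 * n)) (hx : x ∈ E) (hxn : x ≠ (n : ZMod (2 * n))) (hx0 : x ≠ 0) :
    {s : Set (ZMod (2 * n)) | ∃ y z, y ∈ O ∧ z ∈ O ∧ y ≠ z ∧ s = {y, z} ∧
        (y - z = x ∨ z - y = x)}.ncard = n ∧
    (n - 2) / 2 ≤
      {s : Set (ZMod (2 * n)) | ∃ y z, y ∈ O ∧ z ∈ O ∧ y ≠ z ∧ s = {y, z} ∧
        y + z = x}.ncard := by
  haveI : NeZero (2 * n) := ⟨by omega⟩
  set φ := ZMod.castHom (dvd_mul_right 2 n) (ZMod 2) with hφ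
  have hφx : φ x = 0 := by rw [hE] at hx; exact hx
  have hmemO : ∀ a, a ∈ O ↔ φ a = 1 := by intro a; rw [hO]; rfl
  have htwo : ∀ b : ZMod 2, b = 0 ↔ ¬ b = 1 := by decide
  -- |O| = n
  have hEc : E = Oᶜ := by
    ext a
    simp only [hE, hO, mem_compl_iff, mem_setOf_eq]
    exact htwo (φ a)
  have himg : (fun y => y + 1) '' E = O := by
    ext a
    simp only [mem_image]
    constructor
    · rintro ⟨b, hb, rfl⟩
      rw [hE] at hb
      rw [hmemO]
      rw [map_add, hb, map_one]
      decide
    · intro ha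
      refine ⟨a - 1, ?_, by ring⟩
      rw [hE]
      rw [hmemO] at ha
      show φ (a - 1) = 0
      rw [map_sub, ha, map_one, sub_self]
  have hcardEO : E.ncard = O.ncard := by
    rw [← himg, Set.ncard_image_of_injective _ (add_left_injective 1)]
  have hcardO : O.ncard = n := by
    have h1 : O.ncard + Oᶜ.ncard = Nat.card (ZMod (2 * n)) :=
      Set.ncard_add_ncard_compl O
    rw [Nat.card_zmod] at h1
    rw [← hEc, hcardEO] at h1
    omega
  constructor
  · -- difference pairs: image of O under y ↦ {y, y + x}
    have hS1 : {s : Set (ZMod (2 * n)) | ∃ y z, y ∈ O ∧ z ∈ O ∧ y ≠ z ∧ s = {y, z} ∧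
        (y - z = x ∨ z - y = x)} = (fun y => ({y, y + x} : Set (ZMod (2 * n)))) '' O := by
      ext s
      simp only [mem_setOf_eq, mem_image]
      constructor
      · rintro ⟨y, z, hy, hz, hyz, rfl, h | h⟩
        · refine ⟨z, hz, ?_⟩
          rw [Set.pair_comm]
          congr 1
          rw [← h]; ring
        · refine ⟨y, hy, ?_⟩
          congr 1
          rw [← h]; ring
      · rintro ⟨y, hy, rfl⟩
        refine ⟨y, y + x, hy, ?_, ?_, rfl, Or.inr (by ring)⟩
        · rw [hmemO] at hy ⊢
          rw [map_add, hy, hφx, add_zero]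
        · intro h
          exact hx0 (by linear_combination -h)
    rw [hS1]
    have hinj : Function.Injective (fun y => ({y, y + x} : Set (ZMod (2 * n)))) := by
      intro a b hab
      simp only [Set.ext_iff] at hab
      have h1 := (hab a).mp (by left; rfl)
      rcases h1 with h1 | h1
      · exact h1
      · have h2 := (hab b).mpr (by left; rfl)
        rcases h2 with h2 | h2
        · exact h2.symm
        · exfalso
          rw [Set.mem_singleton_iff] at h1 h2
          have : x + x = 0 := by linear_combination -h1 - h2
          rcases zmod_two_torsion n hn x this with h | h
          · exact hx0 h
          · exact hxn h
    rw [Set.ncard_image_of_injective _ hinj, hcardO]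
  · -- sum pairs
    set S2 := {s : Set (ZMod (2 * n)) | ∃ y z, y ∈ O ∧ z ∈ O ∧ y ≠ z ∧ s = {y, z} ∧
        y + z = x} with hS2
    set B : Set (ZMod (2 * n)) := {y | y + y = x} with hB
    set T := O \ B with hT
    set g : ZMod (2 * n) → Set (ZMod (2 * n)) := fun y => {y, x - y} with hg
    have hsub : g '' T ⊆ S2 := by
      rintro s ⟨y, ⟨hyO, hyB⟩, rfl⟩
      refine ⟨y, x - y, hyO, ?_, ?_, rfl, by ring⟩
      · rw [hmemO] at hyO ⊢
        rw [map_sub, hφx, hyO]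
        decide
      · intro h
        exact hyB (show y + y = x by linear_combination h)
    -- |B| ≤ 2
    have hBcard : B.ncard ≤ 2 := by
      rcases Set.eq_empty_or_nonempty B with h | ⟨y0, hy0⟩
      · simp [h]
      · have hBsub : B ⊆ {y0, y0 + n} := by
          intro y hy
          have h1 : (y - y0) + (y - y0) = 0 := by
            have hy' : y + y = x := hy
            have hy0' : y0 + y0 = x := hy0
            linear_combination hy' - hy0'
          rcases zmod_two_torsion n hn _ h1 with h | h
          · left; linear_combination h
          · right
            rw [Set.mem_singleton_iff]
            linear_combination h
        calc B.ncard ≤ ({y0, y0 + (n : ZMod (2 * n))} : Set _).ncard :=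
              Set.ncard_le_ncard hBsub (Set.toFinite _)
          _ ≤ 2 := (Set.ncard_insert_le _ _).trans (by simp)
    -- |T| ≥ n - 2
    have hTcard : n - 2 ≤ T.ncard := by
      have h1 : O ⊆ T ∪ B := by
        intro a ha
        by_cases hab : a ∈ B
        · exact Or.inr hab
        · exact Or.inl ⟨ha, hab⟩
      have h2 : O.ncard ≤ T.ncard + B.ncard :=
        (Set.ncard_le_ncard h1 (Set.toFinite _)).trans (Set.ncard_union_le _ _)
      omega
    -- |T| ≤ 2 * |g '' T|
    have hfib : T.ncard ≤ 2 * (g '' T).ncard := by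
      classical
      have hTfin : T.Finite := Set.toFinite _
      have himgfin : (g '' T).Finite := Set.toFinite _
      rw [Set.ncard_eq_toFinset_card _ hTfin, Set.ncard_eq_toFinset_card _ himgfin]
      have himg2 : himgfin.toFinset = hTfin.toFinset.image g := by
        ext s
        simp only [Set.Finite.mem_toFinset, Finset.mem_image, Set.mem_image]
      rw [himg2]
      apply Finset.card_le_mul_card_image
      intro b hb
      rw [Finset.mem_image] at hb
      obtain ⟨y, hy, rfl⟩ := hb
      have hss : (hTfin.toFinset.filter fun a => g a = g y) ⊆ {y, x - y} := by
        intro a ha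
        rw [Finset.mem_filter] at ha
        have ha2 : a ∈ ({y, x - y} : Set _) := by
          rw [show ({y, x - y} : Set _) = g y from rfl, ← ha.2]
          left; rfl
        simpa using ha2
      calc (hTfin.toFinset.filter fun a => g a = g y).card
          ≤ ({y, x - y} : Finset _).card := Finset.card_le_card hss
        _ ≤ 2 := (Finset.card_insert_le _ _).trans (by simp)
    have hle : (g '' T).ncard ≤ S2.ncard := Set.ncard_le_ncard hsub (Set.toFinite _)
    omega
end

section
/- Let G be a finite abelian group, H a subgroup of index 2, A = G \ H, and x, y ∈ H. If there exist a, b ∈ A with x = a + b and y = a − b, then the number of ordered pairs (a,b) ∈ A × A with x = a + b and y = a − b equals |I|, where I = {h ∈ H : h + h = 0}. -/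
theorem count_pairs_sum_diff_eq_two_torsion (G : Type*) [AddCommGroup G] [Fintype G]
    (H : AddSubgroup G) (hH : H.index = 2)
    (A : Set G) (hA : A = (H : Set G)ᶜ)
    (x y : G) (hx : x ∈ H) (hy : y ∈ H)
    (hex : ∃ a ∈ A, ∃ b ∈ A, x = a + b ∧ y = a - b) :
    {p : G × G | p.1 ∈ A ∧ p.2 ∈ A ∧ x = p.1 + p.2 ∧ y = p.1 - p.2}.ncard =
      {h : G | h ∈ H ∧ h + h = 0}.ncard := by
  obtain ⟨a₀, ha₀, b₀, hb₀, hx₀, hy₀⟩ := hex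
  subst hA
  have ha₀' : a₀ ∉ H := ha₀
  have hb₀' : b₀ ∉ H := hb₀
  have himg : {p : G × G | p.1 ∈ ((H : Set G)ᶜ) ∧ p.2 ∈ ((H : Set G)ᶜ) ∧
      x = p.1 + p.2 ∧ y = p.1 - p.2} =
      (fun t => (a₀ + t, b₀ + t)) '' {h : G | h ∈ H ∧ h + h = 0} := by
    ext ⟨a, b⟩
    simp only [Set.mem_setOf_eq, Set.mem_image, Set.mem_compl_iff, SetLike.mem_coe,
      Prod.mk.injEq]
    constructor
    · rintro ⟨ha, hb, hxa, hya⟩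
      refine ⟨a - a₀, ⟨?_, ?_⟩, by abel, ?_⟩
      · rw [sub_eq_add_neg, AddSubgroup.add_mem_iff_of_index_two hH]
        simp [ha, ha₀']
      · have h2a : a + a = x + y := by rw [hxa, hya]; abel
        have h2a0 : a₀ + a₀ = x + y := by rw [hx₀, hy₀]; abel
        have : (a - a₀) + (a - a₀) = (a + a) - (a₀ + a₀) := by abel
        rw [this, h2a, h2a0, sub_self]
      · have hba : b = x - a := by rw [hxa]; abel
        have hba0 : b₀ = x - a₀ := by rw [hx₀]; abel
        have h2 : (a - a₀) + (a - a₀) = 0 := by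
          have h2a : a + a = x + y := by rw [hxa, hya]; abel
          have h2a0 : a₀ + a₀ = x + y := by rw [hx₀, hy₀]; abel
          have : (a - a₀) + (a - a₀) = (a + a) - (a₀ + a₀) := by abel
          rw [this, h2a, h2a0, sub_self]
        rw [hba, hba0]
        have h3 : (x - a₀) + (a - a₀) = (x - a) + ((a - a₀) + (a - a₀)) := by abel
        rw [h3, h2, add_zero]
    · rintro ⟨t, ⟨htH, ht2⟩, rfl, rfl⟩
      refine ⟨?_, ?_, ?_, ?_⟩
      · intro hmem
        have : a₀ = (a₀ + t) - t := by abel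
        exact ha₀' (this ▸ sub_mem hmem htH)
      · intro hmem
        have : b₀ = (b₀ + t) - t := by abel
        exact hb₀' (this ▸ sub_mem hmem htH)
      · rw [hx₀]
        have : a₀ + t + (b₀ + t) = a₀ + b₀ + (t + t) := by abel
        rw [this, ht2, add_zero]
      · rw [hy₀]; abel
  rw [himg, Set.ncard_image_of_injective]
  intro s t hst
  simpa using congrArg Prod.fst hst
end
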